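/- arXiv:2307.06866 — 2 statements merged into one kernel-verified Lean document; each statement's English description precedes it below -/
import Mathlib

section
/- The function p₀(x) = x^{β-2}(1-x)^{-β-2} exp(-c/(1-x)), with β = 2(1-R₀⁻¹)/(σ²/λ̄) and c = 2R₀⁻¹/(σ²/λ̄), is integrable on (0,1) if and only if β > 1, i.e., if and only if σ²/λ̄ < 2(1 - 1/R₀). -/
/-!
Near `0` the factor `(1 - x) ^ (-β - 2) * exp (-c / (1 - x))` is pinched between positive
constants, so integrability there is that of `x ^ (β - 2)`, i.e. `β > 1`. Near `1` the factor
`x ^ (β - 2)` is bounded and `exp (-c / (1 - x))` beats every power of `1 - x`, so the density is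
bounded there and always integrable.
-/

open MeasureTheory Set Real Nat

lemma exists_rpow_mul_exp_neg_div_le (a : ℝ) {c : ℝ} (hc : 0 < c) :
    ∃ M, ∀ t ∈ Ioc (0 : ℝ) 1, t ^ a * exp (-c / t) ≤ M := by
  obtain ⟨n, hn⟩ := exists_nat_ge (-a)
  refine ⟨n ! / c ^ n, fun t ⟨ht0, ht1⟩ => ?_⟩
  -- `exp (c / t) ≥ (c / t) ^ n / n!` beats the pole of `t ^ a` once `a + n ≥ 0`.
  have hexp : exp (-c / t) ≤ n ! / c ^ n * t ^ (n : ℝ) := by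
    have hpow_le := pow_div_factorial_le_exp (c / t) (by positivity) n
    rw [neg_div, exp_neg, rpow_natCast, inv_le_comm₀ (exp_pos _) (by positivity)]
    refine (le_of_eq ?_).trans hpow_le
    rw [div_pow]; field_simp
  calc t ^ a * exp (-c / t) ≤ t ^ a * (n ! / c ^ n * t ^ (n : ℝ)) := by gcongr
    _ = n ! / c ^ n * t ^ (a + n) := by rw [rpow_add ht0]; ring
    _ ≤ n ! / c ^ n := mul_le_of_le_one_right (by positivity)
          (rpow_le_one ht0.le ht1 (by linarith))

lemma integrableOn_mul_iff_of_norm_mem_Icc {α 𝕜 : Type*} [MeasurableSpace α] {μ : Measure α}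
    [RCLike 𝕜] {s : Set α} (hs : MeasurableSet s) {f h : α → 𝕜}
    (hh : AEStronglyMeasurable h (μ.restrict s))
    {m M : ℝ} (hm : 0 < m) (hbound : ∀ x ∈ s, ‖h x‖ ∈ Icc m M) :
    IntegrableOn (fun x => f x * h x) s μ ↔ IntegrableOn f s μ := by
  refine ⟨fun hfh => ?_, fun hf => hf.mul_bdd hh ((ae_restrict_iff' hs).2 <| .of_forall
    fun x hx => (hbound x hx).2)⟩
  have hinv : ∀ᵐ x ∂μ.restrict s, ‖(h x)⁻¹‖ ≤ m⁻¹ := (ae_restrict_iff' hs).2 <| .of_forall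
    fun x hx => by rw [norm_inv]; exact inv_anti₀ hm (hbound x hx).1
  refine (hfh.mul_bdd hh.aemeasurable.inv.aestronglyMeasurable hinv).congr
    ((ae_restrict_iff' hs).2 <| .of_forall fun x hx => ?_)
  have hx0 : h x ≠ 0 := norm_pos_iff.1 (hm.trans_le (hbound x hx).1)
  simp [hx0]

lemma continuousOn_one_sub_rpow_mul_exp (b c : ℝ) :
    ContinuousOn (fun x : ℝ => (1 - x) ^ b * exp (-c / (1 - x))) (Iio 1) := by
  have hpos : ∀ x ∈ Iio (1 : ℝ), 0 < 1 - x := fun x hx => sub_pos.2 hx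
  exact ((continuousOn_const.sub continuousOn_id).rpow_const fun x hx => Or.inl (hpos x hx).ne').mul
    (continuousOn_const.div (continuousOn_const.sub continuousOn_id)
      fun x hx => (hpos x hx).ne').rexp

lemma integrableOn_Ioo_rpow_mul_one_sub_iff (a b c : ℝ) {δ : ℝ} (hδ : 0 < δ) (hδ1 : δ < 1) :
    IntegrableOn (fun x => x ^ a * ((1 - x) ^ b * exp (-c / (1 - x)))) (Ioo 0 δ) ↔ -1 < a := by
  have hcont : ContinuousOn (fun x : ℝ => (1 - x) ^ b * exp (-c / (1 - x))) (Icc 0 δ) :=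
    (continuousOn_one_sub_rpow_mul_exp b c).mono fun x hx => hx.2.trans_lt hδ1
  have hpos : ∀ x ∈ Icc 0 δ, 0 < (1 - x) ^ b * exp (-c / (1 - x)) := fun x hx =>
    mul_pos (rpow_pos_of_pos (by linarith [hx.2]) _) (exp_pos _)
  obtain ⟨m, hm, hmle⟩ := isCompact_Icc.exists_forall_le' hcont hpos
  obtain ⟨M, hleM⟩ := isCompact_Icc.exists_bound_of_continuousOn hcont
  rw [integrableOn_mul_iff_of_norm_mem_Icc measurableSet_Ioo
    ((hcont.mono Ioo_subset_Icc_self).aestronglyMeasurable measurableSet_Ioo) hm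
    fun x hx => ⟨(hmle x (Ioo_subset_Icc_self hx)).trans (le_abs_self _),
      hleM x (Ioo_subset_Icc_self hx)⟩]
  exact intervalIntegral.integrableOn_Ioo_rpow_iff hδ

lemma integrableOn_Ico_rpow_mul_one_sub (a b : ℝ) {c ε : ℝ} (hc : 0 < c) (hε : 0 < ε) :
    IntegrableOn (fun x => x ^ a * ((1 - x) ^ b * exp (-c / (1 - x)))) (Ico ε 1) := by
  have hpow : ContinuousOn (fun x : ℝ => x ^ a) (Icc ε 1) :=
    continuousOn_id.rpow_const fun x hx => Or.inl (hε.trans_le hx.1).ne'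
  obtain ⟨C, hC⟩ := isCompact_Icc.exists_bound_of_continuousOn hpow
  obtain ⟨M, hM⟩ := exists_rpow_mul_exp_neg_div_le b hc
  have hcont : ContinuousOn (fun x => x ^ a * ((1 - x) ^ b * exp (-c / (1 - x)))) (Ico ε 1) :=
    (hpow.mono Ico_subset_Icc_self).mul
      ((continuousOn_one_sub_rpow_mul_exp b c).mono fun x hx => hx.2)
  refine .of_bound measure_Ico_lt_top (hcont.aestronglyMeasurable measurableSet_Ico) (C * M)
    ((ae_restrict_iff' measurableSet_Ico).2 <| .of_forall fun x hx => ?_)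
  have h1x : 1 - x ∈ Ioc (0 : ℝ) 1 := ⟨sub_pos.2 hx.2, by linarith [hε.trans_le hx.1]⟩
  have hnonneg : 0 ≤ (1 - x) ^ b * exp (-c / (1 - x)) :=
    mul_nonneg (rpow_nonneg h1x.1.le _) (exp_pos _).le
  rw [norm_mul, norm_of_nonneg hnonneg]
  exact mul_le_mul (hC x (Ico_subset_Icc_self hx)) (hM _ h1x) hnonneg
    ((norm_nonneg _).trans (hC x (Ico_subset_Icc_self hx)))

/-- Integrability of the Itô stationary PDF of the stochastic SIS model on `(0,1)`. -/
theorem ito_stationary_pdf_integrable_iff (R0 lamBar sigma : ℝ)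
    (hR0 : 1 < R0) (hlam : 0 < lamBar) (hsigma : 0 < sigma)
    (s beta c : ℝ) (hs : s = sigma^2 / lamBar) (hbeta : beta = 2 * (1 - 1/R0) / s)
    (hc : c = (2 / R0) / s) :
    (IntegrableOn
        (fun x : ℝ => x ^ (beta - 2) * (1 - x) ^ (-beta - 2) * Real.exp (-c / (1 - x)))
        (Set.Ioo 0 1) ↔ 1 < beta) ∧
    (1 < beta ↔ sigma^2 / lamBar < 2 * (1 - 1/R0)) := by
  have hs_pos : 0 < s := by rw [hs]; positivity
  have hc_pos : 0 < c := by rw [hc]; exact div_pos (div_pos two_pos (by linarith)) hs_pos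
  refine ⟨?_, by rw [hbeta, ← hs, one_lt_div hs_pos]⟩
  simp_rw [mul_assoc]
  rw [← Ioo_union_Ico_eq_Ioo (by norm_num : (0 : ℝ) < 1 / 2) (by norm_num), integrableOn_union,
    integrableOn_Ioo_rpow_mul_one_sub_iff _ _ _ (by norm_num) (by norm_num)]
  simp only [integrableOn_Ico_rpow_mul_one_sub _ _ hc_pos (by norm_num : (0 : ℝ) < 1 / 2),
    and_true]
  constructor <;> intro h <;> linarith
end

section
/- The root x₊(s) = [3s - 1 + √((1+s)² - 8s/R₀)]/(4s) is nondecreasing in s (on the domain where the square root is real and x₊ ∈ (0,1)) if and only if R₀ ≥ 2. -/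
/-!
Writing `D = (1 + s)² - 8s/R₀` and `E = 1 + s - 4s/R₀`, where `D > 0` one has
`x₊'(s) = (√D - E) / (4s²√D)` and `D - E² = 8s²(R₀ - 2)/R₀²`. So for `R₀ ≥ 2` the derivative is
nonnegative wherever `D > 0`, and the only admissible point with `D = 0` is `R₀ = 2, s = 1`, where
`x₊ ≡ 1/2` to the left, forcing the derivative to vanish. For `R₀ < 2` the derivative is negative
at any admissible point with `E > 0`.
-/

open Filter Set Topology

theorem deriv_eq_zero_of_eventuallyEq_const_nhdsLE {F : Type*} [NormedAddCommGroup F]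
    [NormedSpace ℝ F] {f : ℝ → F} {x : ℝ} {c : F} (h : f =ᶠ[𝓝[≤] x] fun _ => c) :
    deriv f x = 0 := by
  by_cases hf : DifferentiableAt ℝ f x
  · rw [← hf.derivWithin (uniqueDiffWithinAt_Iic x), h.derivWithin_eq_of_mem self_mem_Iic]
    exact congrFun (derivWithin_const _ _) x
  · exact deriv_zero_of_not_differentiableAt hf

namespace SIS

noncomputable def discr (R0 s : ℝ) : ℝ := (1 + s)^2 - 8*s/R0

noncomputable def mode (R0 s : ℝ) : ℝ := (3*s - 1 + √(discr R0 s)) / (4*s)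

variable {R0 s : ℝ}

theorem hasDerivAt_discr (R0 s : ℝ) : HasDerivAt (discr R0) (2*(1 + s) - 8/R0) s := by
  refine ((((hasDerivAt_id s).const_add 1).pow 2).sub
    (((hasDerivAt_id s).const_mul 8).div_const R0)).congr_deriv ?_
  norm_num

theorem hasDerivAt_mode (hR0 : R0 ≠ 0) (hs : s ≠ 0) (hD : 0 < discr R0 s) :
    HasDerivAt (mode R0) ((√(discr R0 s) - (1 + s - 4*s/R0)) / (4*s^2*√(discr R0 s))) s := by
  have hnum := (((hasDerivAt_id s).const_mul 3).sub_const 1).add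
    ((hasDerivAt_discr R0 s).sqrt hD.ne')
  refine (hnum.div ((hasDerivAt_id s).const_mul 4) (by simpa using hs)).congr_deriv ?_
  have hq2 : R0 * √(discr R0 s)^2 = R0 * (1 + s)^2 - 8*s := by
    rw [Real.sq_sqrt hD.le, discr]; field_simp
  simp only [id, Pi.add_apply]
  field_simp
  linear_combination (-2) * hq2

theorem deriv_mode_nonneg_iff (hR0 : R0 ≠ 0) (hs : s ≠ 0) (hD : 0 < discr R0 s) :
    0 ≤ deriv (mode R0) s ↔ 1 + s - 4*s/R0 ≤ √(discr R0 s) := by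
  have : 0 < 4*s^2*√(discr R0 s) := by have := Real.sqrt_pos.2 hD; positivity
  rw [(hasDerivAt_mode hR0 hs hD).deriv, le_div_iff₀ this, zero_mul, sub_nonneg]

theorem discr_sub_sq (hR0 : R0 ≠ 0) :
    discr R0 s - (1 + s - 4*s/R0)^2 = 8*s^2*(R0 - 2)/R0^2 := by
  unfold discr; field_simp; ring

theorem le_sqrt_discr_of_two_le (hR0 : 2 ≤ R0) (s : ℝ) : 1 + s - 4*s/R0 ≤ √(discr R0 s) := by
  refine (le_abs_self _).trans (Real.abs_le_sqrt ?_)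
  have := discr_sub_sq (s := s) (by positivity : R0 ≠ 0)
  have : 0 ≤ 8*s^2*(R0 - 2)/R0^2 := div_nonneg (by nlinarith) (by positivity)
  linarith

theorem sqrt_discr_lt_of_lt_two (hR0 : 0 < R0) (hR0' : R0 < 2) (hs : s ≠ 0)
    (hE : 0 < 1 + s - 4*s/R0) : √(discr R0 s) < 1 + s - 4*s/R0 := by
  rw [Real.sqrt_lt' hE]
  have := discr_sub_sq (s := s) hR0.ne'
  have : 8*s^2*(R0 - 2)/R0^2 < 0 :=
    div_neg_of_neg_of_pos (mul_neg_of_pos_of_neg (by positivity) (by linarith)) (by positivity)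
  linarith

theorem mode_mem_Ioo (hR0 : 0 < R0) (hs : 0 < s) (h : 1 - 3*s < √(discr R0 s)) :
    mode R0 s ∈ Ioo 0 1 := by
  have : √(discr R0 s) < 1 + s := by
    rw [Real.sqrt_lt' (by linarith), discr]
    have : 0 < 8*s/R0 := by positivity
    linarith
  constructor
  · exact div_pos (by linarith) (by positivity)
  · rw [mode, div_lt_one (by positivity)]; linarith

theorem eq_two_and_eq_one_of_discr_nonpos (hR0 : 2 ≤ R0) (hs : 0 < s) (hD : discr R0 s ≤ 0) :
    R0 = 2 ∧ s = 1 := by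
  have : 8*s/R0 ≤ 4*s := by rw [div_le_iff₀ (by positivity)]; nlinarith
  unfold discr at hD
  obtain rfl : s = 1 := by nlinarith [sq_nonneg (1 - s)]
  rw [sub_nonpos, le_div_iff₀ (by positivity)] at hD
  exact ⟨by linarith, rfl⟩

theorem mode_two_eq_half (hs : 0 < s) (hs1 : s ≤ 1) : mode 2 s = 1/2 := by
  have : discr 2 s = (1 - s)^2 := by unfold discr; ring
  rw [mode, this, Real.sqrt_sq (by linarith)]
  field_simp
  ring

theorem deriv_mode_two_one : deriv (mode 2) 1 = 0 :=
  deriv_eq_zero_of_eventuallyEq_const_nhdsLE <| by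
    filter_upwards [nhdsWithin_le_nhds (Ioi_mem_nhds one_pos), self_mem_nhdsWithin] with t ht ht'
    exact mode_two_eq_half ht ht'

end SIS

open SIS

/-- The nonzero mode `x₊(s)` of the Itô stationary PDF is nondecreasing in the noise
intensity `s` (on the admissible domain) if and only if `R₀ ≥ 2`. -/
theorem mode_nondecreasing_iff_R0_ge_two (R0 : ℝ) (hR0 : 1 < R0)
    (xp : ℝ → ℝ)
    (hxp : xp = fun s => (3*s - 1 + Real.sqrt ((1 + s)^2 - 8*s/R0)) / (4*s)) :
    (∀ s : ℝ, 0 < s → 8*s/R0 ≤ (1 + s)^2 → xp s ∈ Set.Ioo (0:ℝ) 1 →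
        0 ≤ deriv xp s) ↔ 2 ≤ R0 := by
  obtain rfl : xp = mode R0 := hxp
  constructor
  · intro h
    by_contra! hlt
    -- chosen so that `1/R₀ = 1 - 2s`, which turns `D` and `E` into polynomials in `s`
    set s := (R0 - 1) / (2 * R0) with hs_def
    have hs : 0 < s := div_pos (by linarith) (by linarith)
    have hinv : R0⁻¹ = 1 - 2*s := by rw [hs_def]; field_simp; ring
    have hD_eq : discr R0 s = (1 - 3*s)^2 + 8*s^2 := by rw [discr, div_eq_mul_inv, hinv]; ring
    have hE_eq : 1 + s - 4*s/R0 = 1 - 3*s + 8*s^2 := by rw [div_eq_mul_inv, hinv]; ring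
    have hD : 0 < discr R0 s := by rw [hD_eq]; positivity
    have hE : 0 < 1 + s - 4*s/R0 := by rw [hE_eq]; nlinarith
    have hmem : mode R0 s ∈ Ioo 0 1 :=
      mode_mem_Ioo (by linarith) hs (Real.lt_sqrt_of_sq_lt (by rw [hD_eq]; nlinarith))
    have hderiv := h s hs (by rw [discr] at hD; linarith) hmem
    rw [deriv_mode_nonneg_iff (by positivity) hs.ne' hD] at hderiv
    exact (sqrt_discr_lt_of_lt_two (by positivity) hlt hs.ne' hE).not_ge hderiv
  · intro h2 s hs _ _
    by_cases hD : 0 < discr R0 s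
    · exact (deriv_mode_nonneg_iff (by positivity) hs.ne' hD).2 (le_sqrt_discr_of_two_le h2 s)
    · obtain ⟨rfl, rfl⟩ := eq_two_and_eq_one_of_discr_nonpos h2 hs (not_lt.1 hD)
      exact deriv_mode_two_one.ge
end
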